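/- arXiv:1309.7477 — 6 statements merged into one kernel-verified Lean document; each statement's English description precedes it below -/
import Mathlib

section
/- Let n > 2. If (x,n-1) is irreducible in S_Γ^s and (x,n) ∈ S_Γ^s, then (x,n) is irreducible in S_Γ^s. -/
/-- The Leamer monoid as a subset of ℕ × ℕ: (0,0) together with all (x,n), n ≥ 1,
such that x + i*s ∈ Γ for all 0 ≤ i ≤ n. -/
def Leamer (Γ : AddSubmonoid ℕ) (s : ℕ) : Set (ℕ × ℕ) :=
  {p | p = (0, 0) ∨ (1 ≤ p.2 ∧ ∀ i ≤ p.2, p.1 + i * s ∈ Γ)}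

/-- An irreducible (atom) of a subset S of ℕ × ℕ: a nonzero element of S that is not the
sum of two nonzero elements of S. -/
def LIrred (S : Set (ℕ × ℕ)) (z : ℕ × ℕ) : Prop :=
  z ∈ S ∧ z ≠ 0 ∧ ∀ a b : ℕ × ℕ, a ∈ S → b ∈ S → a ≠ 0 → b ≠ 0 → z ≠ a + b

/-- A reducible element of S: an element of S that is the sum of two nonzero elements of S. -/
def LReducible (S : Set (ℕ × ℕ)) (z : ℕ × ℕ) : Prop :=
  z ∈ S ∧ ∃ a b : ℕ × ℕ, a ∈ S ∧ b ∈ S ∧ a ≠ 0 ∧ b ≠ 0 ∧ z = a + b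

/-- The set of factorization lengths of z into irreducibles of S. -/
def LSet (S : Set (ℕ × ℕ)) (z : ℕ × ℕ) : Set ℕ :=
  {r | ∃ l : Multiset (ℕ × ℕ), Multiset.card l = r ∧ (∀ a ∈ l, LIrred S a) ∧ l.sum = z}

/-- The Delta set of z: differences of successive factorization lengths. -/
def LDelta (S : Set (ℕ × ℕ)) (z : ℕ × ℕ) : Set ℕ :=
  {d | ∃ a b, a ∈ LSet S z ∧ b ∈ LSet S z ∧ a < b ∧
    (∀ c, a < c → c < b → c ∉ LSet S z) ∧ d = b - a}

/-- The Delta set of the monoid S. -/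
def LDeltaMonoid (S : Set (ℕ × ℕ)) : Set ℕ :=
  {d | ∃ z, z ∈ S ∧ z ≠ 0 ∧ d ∈ LDelta S z}

/-- The Frobenius number of a numerical monoid Γ. -/
noncomputable def Frob (Γ : AddSubmonoid ℕ) : ℕ := sSup {x | x ∉ Γ}

/-- The numerical monoid generated by the arithmetic sequence m, m+s, ..., m+ks. -/
def ArithGamma (m k s : ℕ) : AddSubmonoid ℕ :=
  AddSubmonoid.closure {v | ∃ j ≤ k, v = m + j * s}

section Leamer

variable {Γ : AddSubmonoid ℕ} {s : ℕ}

theorem mk_mem_leamer_of_le {x m k : ℕ} (h : (x, m) ∈ Leamer Γ s) (hk : 1 ≤ k) (hkm : k ≤ m) :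
    (x, k) ∈ Leamer Γ s := by
  rcases h with h | ⟨-, h⟩
  · simp only [Prod.mk.injEq] at h
    omega
  · exact Or.inr ⟨hk, fun i hi => h i (hi.trans hkm)⟩

theorem mem_leamer_snd_pos {p : ℕ × ℕ} (hp : p ∈ Leamer Γ s) (hp0 : p ≠ 0) : 1 ≤ p.2 :=
  hp.resolve_left hp0 |>.1

/-- As `n ≥ 3`, one of the two summands has second coordinate at least 2, and lowering it by one
keeps it in the monoid. -/
theorem LReducible.leamer_pred {x n : ℕ} (h : LReducible (Leamer Γ s) (x, n)) (hn : 2 < n) :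
    LReducible (Leamer Γ s) (x, n - 1) := by
  obtain ⟨hmem, a, b, ha, hb, ha0, hb0, hab⟩ := h
  refine ⟨mk_mem_leamer_of_le hmem (by omega) (by omega), ?_⟩
  have hsnd : n = a.2 + b.2 := congrArg Prod.snd hab
  wlog ha2 : 2 ≤ a.2 generalizing a b with H
  · have ha1 := mem_leamer_snd_pos ha ha0
    obtain ⟨b', a', hb', ha', hb'0, ha'0, hba⟩ :=
      H b a hb ha hb0 ha0 (hab.trans (add_comm a b)) (by omega) (by omega)
    exact ⟨a', b', ha', hb', ha'0, hb'0, hba.trans (add_comm b' a')⟩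
  obtain ⟨a1, a2⟩ := a
  refine ⟨(a1, a2 - 1), b, mk_mem_leamer_of_le ha (by omega) (by omega), hb,
    fun h => by simp only [Prod.ext_iff, Prod.fst_zero, Prod.snd_zero] at h; omega, hb0, Prod.ext ?_ ?_⟩
  · simpa using congrArg Prod.fst hab
  · simp only [Prod.snd_add]
    omega

end Leamer

theorem lIrred_iff_not_lReducible {S : Set (ℕ × ℕ)} {z : ℕ × ℕ} :
    LIrred S z ↔ z ∈ S ∧ z ≠ 0 ∧ ¬ LReducible S z := by
  simp only [LIrred, LReducible, not_and, not_exists]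
  grind

theorem stmt4_general (Γ : AddSubmonoid ℕ) (s : ℕ)
    (x n : ℕ) (hn : 2 < n) (h1 : LIrred (Leamer Γ s) (x, n - 1))
    (h2 : (x, n) ∈ Leamer Γ s) : LIrred (Leamer Γ s) (x, n) := by
  rw [lIrred_iff_not_lReducible] at h1 ⊢
  refine ⟨h2, fun h => ?_, fun hred => h1.2.2 (hred.leamer_pred hn)⟩
  have : n = 0 := congrArg Prod.snd h
  omega

theorem stmt4 (Γ : AddSubmonoid ℕ) (hΓ : {x : ℕ | x ∉ Γ}.Finite) (s : ℕ) (hs : s ∉ Γ)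
    (x n : ℕ) (hn : 2 < n) (h1 : LIrred (Leamer Γ s) (x, n - 1))
    (h2 : (x, n) ∈ Leamer Γ s) : LIrred (Leamer Γ s) (x, n) :=
  stmt4_general Γ s x n hn h1 h2
end

section
/- Let x₀ be the smallest natural number with (x₀,1) ∈ S_Γ^s. For all x > F(Γ) + x₀ and all n ≥ 2, the element (x,n) is reducible in S_Γ^s, i.e., it can be written as a sum of two nonzero elements of S_Γ^s. -/
theorem mem_of_frob_lt {Γ : AddSubmonoid ℕ} (hΓ : {x : ℕ | x ∉ Γ}.Finite) {m : ℕ}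
    (hm : Frob Γ < m) : m ∈ Γ := by
  by_contra hmΓ
  exact hm.not_ge (le_csSup hΓ.bddAbove hmΓ)

theorem mk_mem_leamer_of_frob_lt {Γ : AddSubmonoid ℕ} (hΓ : {x : ℕ | x ∉ Γ}.Finite) (s : ℕ)
    {y n : ℕ} (hy : Frob Γ < y) (hn : 1 ≤ n) : (y, n) ∈ Leamer Γ s :=
  Or.inr ⟨hn, fun i _ => mem_of_frob_lt hΓ (hy.trans_le (Nat.le_add_right y (i * s)))⟩

theorem stmt7_general (Γ : AddSubmonoid ℕ) (hΓ : {x : ℕ | x ∉ Γ}.Finite) (s : ℕ)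
    (x₀ : ℕ) (hx₀ : IsLeast {x : ℕ | (x, 1) ∈ Leamer Γ s} x₀) :
    ∀ x n : ℕ, Frob Γ + x₀ < x → 2 ≤ n →
      ∃ a b : ℕ × ℕ, a ∈ Leamer Γ s ∧ b ∈ Leamer Γ s ∧ a ≠ 0 ∧ b ≠ 0 ∧ (x, n) = a + b := by
  intro x n hx hn
  refine ⟨(x₀, 1), (x - x₀, n - 1), hx₀.1,
    mk_mem_leamer_of_frob_lt hΓ s (by omega) (by omega), ?_, ?_, ?_⟩
  · simp [Prod.ext_iff]
  · simp only [ne_eq, Prod.ext_iff, Prod.fst_zero, Prod.snd_zero, not_and]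
    omega
  · simp only [Prod.mk_add_mk, Prod.mk.injEq]
    omega

theorem stmt7 (Γ : AddSubmonoid ℕ) (hΓ : {x : ℕ | x ∉ Γ}.Finite) (s : ℕ) (hs : s ∉ Γ)
    (x₀ : ℕ) (hx₀ : IsLeast {x : ℕ | (x, 1) ∈ Leamer Γ s} x₀) :
    ∀ x n : ℕ, Frob Γ + x₀ < x → 2 ≤ n →
      ∃ a b : ℕ × ℕ, a ∈ Leamer Γ s ∧ b ∈ Leamer Γ s ∧ a ≠ 0 ∧ b ≠ 0 ∧ (x, n) = a + b :=
  stmt7_general Γ hΓ s x₀ hx₀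
end

section
/- For every integer t ≥ 2, the element (t·x_f, t) of the Leamer monoid S_Γ^s (where x_f is the first infinite column) has elasticity t/2; in particular, it has a factorization of length t into atoms and also a factorization of length 2 into atoms, and 2 is its minimum factorization length. -/
/-!
Every nonzero element of the Leamer monoid has second coordinate at least 1, so elements of
the form `(x, 1)` are atoms, and a factorization of `z` has at most `z.2` atoms. Since `x_f`
lies in the first infinite column, `(x_f, 1)` and `((t - 1) x_f, 1)` are atoms, giving the
factorizations `t • (x_f, 1)` and `(x_f, t - 1) + ((t - 1) x_f, 1)` of `(t x_f, t)`; the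
latter also shows that `(t x_f, t)` is not an atom, so no factorization has length 0 or 1.
-/

section Factorizations

variable {S : Set (ℕ × ℕ)}

theorem nsmul_mem_LSet {a : ℕ × ℕ} (ha : LIrred S a) (n : ℕ) : n ∈ LSet S (n • a) :=
  ⟨Multiset.replicate n a, Multiset.card_replicate n a,
    fun _ hb => Multiset.eq_of_mem_replicate hb ▸ ha, Multiset.sum_replicate n a⟩

theorem two_mem_LSet_add {a b : ℕ × ℕ} (ha : LIrred S a) (hb : LIrred S b) :
    2 ∈ LSet S (a + b) := by
  refine ⟨{a, b}, rfl, ?_, by simp⟩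
  simp only [Multiset.insert_eq_cons, Multiset.mem_cons, Multiset.mem_singleton]
  rintro c (rfl | rfl) <;> assumption

theorem zero_notMem_LSet {z : ℕ × ℕ} (hz : z ≠ 0) : 0 ∉ LSet S z := by
  rintro ⟨l, hcard, -, hsum⟩
  rw [Multiset.card_eq_zero.mp hcard, Multiset.sum_zero] at hsum
  exact hz hsum.symm

theorem LIrred.of_one_mem_LSet {z : ℕ × ℕ} (h : 1 ∈ LSet S z) : LIrred S z := by
  obtain ⟨l, hcard, hirr, hsum⟩ := h
  obtain ⟨a, rfl⟩ := Multiset.card_eq_one.mp hcard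
  rw [Multiset.sum_singleton] at hsum
  exact hsum ▸ hirr a (Multiset.mem_singleton_self a)

theorem two_le_of_mem_LSet_add {a b : ℕ × ℕ} (ha : a ∈ S) (hb : b ∈ S) (ha0 : a ≠ 0)
    (hb0 : b ≠ 0) {r : ℕ} (hr : r ∈ LSet S (a + b)) : 2 ≤ r := by
  by_contra! hlt
  interval_cases r
  · exact zero_notMem_LSet (fun h => ha0 (add_eq_zero.mp h).1) hr
  · exact (LIrred.of_one_mem_LSet hr).2.2 a b ha hb ha0 hb0 rfl

end Factorizations

section LeamerMonoid

variable {Γ : AddSubmonoid ℕ} {s : ℕ}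

theorem one_le_snd_of_mem_Leamer {a : ℕ × ℕ} (ha : a ∈ Leamer Γ s) (h0 : a ≠ 0) : 1 ≤ a.2 :=
  (ha.resolve_left h0).1

theorem fst_mem_of_mem_Leamer {x n : ℕ} (h : (x, n) ∈ Leamer Γ s) : x ∈ Γ := by
  rcases h with h | ⟨-, h⟩
  · exact (Prod.mk.inj h).1 ▸ Γ.zero_mem
  · simpa using h 0 (Nat.zero_le n)

theorem add_fst_mem_Leamer {x n y : ℕ} (h : (x, n) ∈ Leamer Γ s) (hn : 1 ≤ n) (hy : y ∈ Γ) :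
    (x + y, n) ∈ Leamer Γ s := by
  refine Or.inr ⟨hn, fun i hi => ?_⟩
  rw [add_right_comm]
  exact Γ.add_mem ((h.resolve_left (by simp only [Prod.mk.injEq, not_and]; omega)).2 i hi) hy

theorem LIrred_Leamer_mk_one {x : ℕ} (hx : (x, 1) ∈ Leamer Γ s) : LIrred (Leamer Γ s) (x, 1) := by
  refine ⟨hx, by simp, fun a b ha hb ha0 hb0 hab => ?_⟩
  have := one_le_snd_of_mem_Leamer ha ha0
  have := one_le_snd_of_mem_Leamer hb hb0
  have : 1 = a.2 + b.2 := congrArg Prod.snd hab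
  omega

theorem le_snd_of_mem_LSet_Leamer {z : ℕ × ℕ} {r : ℕ} (hr : r ∈ LSet (Leamer Γ s) z) :
    r ≤ z.2 := by
  obtain ⟨l, rfl, hirr, rfl⟩ := hr
  have := Multiset.card_nsmul_le_sum (s := l.map Prod.snd) (a := 1) <| by
    simp only [Multiset.mem_map]
    rintro _ ⟨a, ha, rfl⟩
    exact one_le_snd_of_mem_Leamer (hirr a ha).1 (hirr a ha).2.1
  simpa [Multiset.snd_sum] using this

end LeamerMonoid

theorem stmt9_general (Γ : AddSubmonoid ℕ) (s : ℕ)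
    (xf : ℕ) (hxf : IsLeast {x : ℕ | ∀ n : ℕ, 1 ≤ n → (x, n) ∈ Leamer Γ s} xf)
    (t : ℕ) (ht : 2 ≤ t) (hatom : LIrred (Leamer Γ s) (xf, t - 1)) :
    t ∈ LSet (Leamer Γ s) (t * xf, t) ∧
    2 ∈ LSet (Leamer Γ s) (t * xf, t) ∧
    (∀ r ∈ LSet (Leamer Γ s) (t * xf, t), 2 ≤ r) ∧
    (∀ r ∈ LSet (Leamer Γ s) (t * xf, t), r ≤ t) := by
  have hcol : (xf, 1) ∈ Leamer Γ s := hxf.1 1 le_rfl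
  have hcomplement : ((t - 1) * xf, 1) ∈ Leamer Γ s := by
    have := add_fst_mem_Leamer hcol le_rfl (Γ.nsmul_mem (fst_mem_of_mem_Leamer hcol) (t - 2))
    convert this using 2
    rw [smul_eq_mul, ← one_add_mul]
    congr 1
    omega
  have hsplit : (xf, t - 1) + ((t - 1) * xf, 1) = (t * xf, t) := by
    ext
    · simp only [Prod.fst_add, ← one_add_mul]; congr 1; omega
    · simp only [Prod.snd_add]; omega
  refine ⟨by simpa using nsmul_mem_LSet (LIrred_Leamer_mk_one hcol) t,
    hsplit ▸ two_mem_LSet_add hatom (LIrred_Leamer_mk_one hcomplement), ?_,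
    fun r hr => le_snd_of_mem_LSet_Leamer hr⟩
  rw [← hsplit]
  exact fun r => two_le_of_mem_LSet_add hatom.1 hcomplement hatom.2.1 (by simp)

theorem stmt9 (Γ : AddSubmonoid ℕ) (hΓ : {x : ℕ | x ∉ Γ}.Finite) (s : ℕ) (hs : s ∉ Γ)
    (xf : ℕ) (hxf : IsLeast {x : ℕ | ∀ n : ℕ, 1 ≤ n → (x, n) ∈ Leamer Γ s} xf)
    (t : ℕ) (ht : 2 ≤ t) (hatom : LIrred (Leamer Γ s) (xf, t - 1)) :
    t ∈ LSet (Leamer Γ s) (t * xf, t) ∧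
    2 ∈ LSet (Leamer Γ s) (t * xf, t) ∧
    (∀ r ∈ LSet (Leamer Γ s) (t * xf, t), 2 ≤ r) ∧
    (∀ r ∈ LSet (Leamer Γ s) (t * xf, t), r ≤ t) :=
  stmt9_general Γ s xf hxf t ht hatom
end

section
/- In any Leamer monoid S_Γ^s, the minimum factorization length function is bounded: there exists N such that every nonzero element of S_Γ^s has a factorization into at most N atoms. Consequently, S_Γ^s is not fully elastic (the set of elasticities is not all of ℚ ∩ [1,∞)). -/
/-!
Since `s ∉ Γ`, every nonzero element `(x, n)` of the Leamer monoid has `x ≥ 1`, so splitting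
off nonzero summands shows that it has a factorization of length at most `x`. Elements with
`n = 1` are atoms. Choose `M` with `[M, ∞) ⊆ Γ`. If `x ≥ 2M` and `n ≥ 2`, then
`(x, n) = (x - M, 1) + (M, n - 1)` with both summands in the monoid, giving a factorization of
length at most `M + 1`; otherwise `x < 2M`. So the minimum length is bounded by `2M + 1`.
With minimum lengths bounded by `N`, an elasticity `a / b` has `b ≤ N`, so it cannot equal
`(N + 2) / (N + 1)`, which is in lowest terms.
-/

section LSet

variable {S : Set (ℕ × ℕ)}

theorem add_mem_LSet_add {a b : ℕ × ℕ} {r t : ℕ} (hr : r ∈ LSet S a) (ht : t ∈ LSet S b) :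
    r + t ∈ LSet S (a + b) := by
  obtain ⟨l, rfl, hl, rfl⟩ := hr
  obtain ⟨m, rfl, hm, rfl⟩ := ht
  refine ⟨l + m, Multiset.card_add l m, fun c hc => ?_, Multiset.sum_add l m⟩
  rcases Multiset.mem_add.mp hc with h | h
  exacts [hl c h, hm c h]

theorem one_mem_LSet_of_LIrred {z : ℕ × ℕ} (hz : LIrred S z) : 1 ∈ LSet S z :=
  ⟨{z}, Multiset.card_singleton z, by simpa using hz, Multiset.sum_singleton z⟩

theorem eq_zero_of_zero_mem_LSet {z : ℕ × ℕ} (h : 0 ∈ LSet S z) : z = 0 := by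
  obtain ⟨l, hl, -, rfl⟩ := h
  rw [Multiset.card_eq_zero.mp hl, Multiset.sum_zero]

theorem exists_mem_LSet_le_fst (hS : ∀ z ∈ S, z ≠ 0 → z.1 ≠ 0) :
    ∀ z ∈ S, z ≠ 0 → ∃ r ∈ LSet S z, r ≤ z.1 := by
  suffices ∀ x, ∀ z ∈ S, z ≠ 0 → z.1 = x → ∃ r ∈ LSet S z, r ≤ z.1 from
    fun z hz h0 => this z.1 z hz h0 rfl
  intro x
  induction x using Nat.strong_induction_on with
  | _ x ih =>
    rintro z hz h0 rfl
    by_cases hirr : LIrred S z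
    · exact ⟨1, one_mem_LSet_of_LIrred hirr, Nat.one_le_iff_ne_zero.mpr (hS z hz h0)⟩
    obtain ⟨a, b, ha, hb, ha0, hb0, rfl⟩ : ∃ a b, a ∈ S ∧ b ∈ S ∧ a ≠ 0 ∧ b ≠ 0 ∧ z = a + b := by
      by_contra! h
      exact hirr ⟨hz, h0, h⟩
    have ha1 := hS a ha ha0
    have hb1 := hS b hb hb0
    obtain ⟨r, hr, hra⟩ := ih a.1 (by simp only [Prod.fst_add]; omega) a ha ha0 rfl
    obtain ⟨t, ht, htb⟩ := ih b.1 (by simp only [Prod.fst_add]; omega) b hb hb0 rfl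
    exact ⟨r + t, add_mem_LSet_add hr ht, by simp only [Prod.fst_add]; omega⟩

end LSet

theorem add_one_dvd_of_cast_div_eq {a b N : ℕ} (hb : b ≠ 0)
    (h : (a : ℚ) / b = ((N : ℚ) + 2) / ((N : ℚ) + 1)) : N + 1 ∣ b := by
  rw [div_eq_div_iff (by exact_mod_cast hb) (by positivity)] at h
  have hnat : a * (N + 1) = (N + 2) * b := by exact_mod_cast h
  have hcop : Nat.Coprime (N + 1) (N + 2) := Nat.coprime_self_add_right.mpr (Nat.coprime_one_right _)
  exact hcop.dvd_of_dvd_mul_left ⟨a, by rw [← hnat, mul_comm]⟩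

theorem not_fully_elastic_of_forall_exists_mem_LSet_le {S : Set (ℕ × ℕ)} {N : ℕ}
    (hN : ∀ z ∈ S, z ≠ 0 → ∃ r ∈ LSet S z, r ≤ N) :
    ¬(∀ q : ℚ, 1 ≤ q → ∃ z : ℕ × ℕ, z ∈ S ∧ z ≠ 0 ∧
        ∃ a b : ℕ, a ∈ LSet S z ∧ b ∈ LSet S z ∧
          (∀ r ∈ LSet S z, r ≤ a) ∧ (∀ r ∈ LSet S z, b ≤ r) ∧ (a : ℚ) / (b : ℚ) = q) := by
  intro hfull
  have hq : (1 : ℚ) ≤ ((N : ℚ) + 2) / ((N : ℚ) + 1) := by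
    rw [le_div_iff₀ (by positivity)]
    linarith
  obtain ⟨z, hz, hz0, a, b, -, hb, -, hbmin, hab⟩ := hfull _ hq
  obtain ⟨r, hr, hrN⟩ := hN z hz hz0
  have hb0 : b ≠ 0 := by
    rintro rfl
    exact hz0 (eq_zero_of_zero_mem_LSet hb)
  have := Nat.le_of_dvd (Nat.pos_of_ne_zero hb0) (add_one_dvd_of_cast_div_eq hb0 hab)
  have := hbmin r hr
  omega

namespace Leamer

variable {Γ : AddSubmonoid ℕ} {s : ℕ} {z : ℕ × ℕ}

theorem one_le_snd (hz : z ∈ Leamer Γ s) (h0 : z ≠ 0) : 1 ≤ z.2 :=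
  hz.resolve_left h0 |>.1

theorem fst_ne_zero (hs : s ∉ Γ) (hz : z ∈ Leamer Γ s) (h0 : z ≠ 0) : z.1 ≠ 0 := by
  intro hz1
  obtain ⟨hn, hmem⟩ := hz.resolve_left h0
  exact hs (by simpa [hz1] using hmem 1 hn)

theorem LIrred_of_snd_eq_one (hz : z ∈ Leamer Γ s) (hz2 : z.2 = 1) : LIrred (Leamer Γ s) z := by
  refine ⟨hz, fun h => by simp [h] at hz2, fun a b ha hb ha0 hb0 hab => ?_⟩
  have := one_le_snd ha ha0
  have := one_le_snd hb hb0
  rw [hab, Prod.snd_add] at hz2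
  omega

theorem mk_mem_of_le {M x n : ℕ} (hM : ∀ y, M ≤ y → y ∈ Γ) (hx : M ≤ x) (hn : 1 ≤ n) :
    (x, n) ∈ Leamer Γ s :=
  Or.inr ⟨hn, fun _ _ => hM _ (hx.trans (Nat.le_add_right _ _))⟩

theorem exists_mem_LSet_le (hs : s ∉ Γ) {M : ℕ} (hM : ∀ y, M ≤ y → y ∈ Γ)
    (hz : z ∈ Leamer Γ s) (h0 : z ≠ 0) : ∃ r ∈ LSet (Leamer Γ s) z, r ≤ 2 * M + 1 := by
  have hlen := exists_mem_LSet_le_fst fun _ => fst_ne_zero hs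
  by_cases hsmall : z.1 < 2 * M
  · obtain ⟨r, hr, hrz⟩ := hlen z hz h0
    exact ⟨r, hr, by omega⟩
  by_cases hz2 : z.2 = 1
  · exact ⟨1, one_mem_LSet_of_LIrred (LIrred_of_snd_eq_one hz hz2), by omega⟩
  have hz2 : 2 ≤ z.2 := by have := one_le_snd hz h0; omega
  have hsplit : z = (z.1 - M, 1) + (M, z.2 - 1) := by
    ext <;> simp only [Prod.fst_add, Prod.snd_add] <;> omega
  have hatom : LIrred (Leamer Γ s) (z.1 - M, 1) :=
    LIrred_of_snd_eq_one (mk_mem_of_le hM (by omega) le_rfl) rfl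
  obtain ⟨r, hr, hrM⟩ := hlen (M, z.2 - 1) (mk_mem_of_le hM le_rfl (by omega))
    (by simp only [ne_eq, Prod.ext_iff, Prod.fst_zero, Prod.snd_zero, not_and]; omega)
  refine ⟨1 + r, hsplit ▸ add_mem_LSet_add (one_mem_LSet_of_LIrred hatom) hr, ?_⟩
  simp only at hrM
  omega

end Leamer

theorem exists_forall_le_mem_of_finite_compl {Γ : AddSubmonoid ℕ} (hΓ : {x : ℕ | x ∉ Γ}.Finite) :
    ∃ M, ∀ y, M ≤ y → y ∈ Γ := by
  obtain ⟨B, hB⟩ := hΓ.bddAbove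
  exact ⟨B + 1, fun y hy => by_contra fun h => absurd (hB h) (by omega)⟩

theorem stmt10 (Γ : AddSubmonoid ℕ) (hΓ : {x : ℕ | x ∉ Γ}.Finite) (s : ℕ) (hs : s ∉ Γ) :
    (∃ N : ℕ, ∀ z ∈ Leamer Γ s, z ≠ 0 → ∃ r ∈ LSet (Leamer Γ s) z, r ≤ N) ∧
    ¬(∀ q : ℚ, 1 ≤ q → ∃ z : ℕ × ℕ, z ∈ Leamer Γ s ∧ z ≠ 0 ∧
        ∃ a b : ℕ, a ∈ LSet (Leamer Γ s) z ∧ b ∈ LSet (Leamer Γ s) z ∧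
          (∀ r ∈ LSet (Leamer Γ s) z, r ≤ a) ∧ (∀ r ∈ LSet (Leamer Γ s) z, b ≤ r) ∧
          (a : ℚ) / (b : ℚ) = q) := by
  obtain ⟨M, hM⟩ := exists_forall_le_mem_of_finite_compl hΓ
  have hbound : ∀ z ∈ Leamer Γ s, z ≠ 0 → ∃ r ∈ LSet (Leamer Γ s) z, r ≤ 2 * M + 1 :=
    fun _ hz h0 => Leamer.exists_mem_LSet_le hs hM hz h0
  exact ⟨⟨_, hbound⟩, not_fully_elastic_of_forall_exists_mem_LSet_le hbound⟩
end

section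
/- Let M be an atomic cancellative commutative monoid and suppose λ = 1 + sup{ℓ(x) : x ∈ M nonunit} is finite, where ℓ(x) is the minimum factorization length of x. If k ∈ Δ(M), then there exists z ∈ M and integers r ≤ λ − k and k' ≥ k such that L(z) ∩ {r, r+1, ..., r+k'} = {r, r+k'}. -/
/-!
Let `s < t` be successive lengths of some `z` with `s + k ≤ t`, chosen with `s` minimal. Split a
length-`t` factorization of `z` as `z = w * y`, where `w` takes `n = s + k - 1` of the atoms.
A length `u < n` of `w` would give the length `u + t - n < t` of `z`, hence `u + t - n ≤ s`; the
largest such `u` would then be followed by `n` in `L(w)`, a gap of size at least `k` starting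
below `s`. By minimality there is none, so `ℓ(w) = s + k - 1 ≤ λ - 1`.
-/

/-- An irreducible of a commutative monoid M: a nonunit not expressible as a product of
two nonunits. -/
def MIrred {M : Type*} [CommMonoid M] (z : M) : Prop :=
  ¬IsUnit z ∧ ∀ a b : M, ¬IsUnit a → ¬IsUnit b → z ≠ a * b

/-- The set of factorization lengths of z into irreducibles. -/
def MLSet {M : Type*} [CommMonoid M] (z : M) : Set ℕ :=
  {r | ∃ l : Multiset M, Multiset.card l = r ∧ (∀ a ∈ l, MIrred a) ∧ l.prod = z}

/-- The Delta set of z: differences of successive factorization lengths. -/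
def MDelta {M : Type*} [CommMonoid M] (z : M) : Set ℕ :=
  {d | ∃ a b, a ∈ MLSet z ∧ b ∈ MLSet z ∧ a < b ∧
    (∀ c, a < c → c < b → c ∉ MLSet z) ∧ d = b - a}

namespace Set

theorem inter_Icc_eq_pair {S : Set ℕ} {s t : ℕ} (hs : s ∈ S) (ht : t ∈ S) (hst : s ≤ t)
    (hgap : ∀ c, s < c → c < t → c ∉ S) : S ∩ Icc s t = {s, t} := by
  ext c
  simp only [mem_inter_iff, mem_Icc, mem_insert_iff, mem_singleton_iff]
  constructor
  · rintro ⟨hc, hsc, hct⟩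
    by_contra hne
    exact hgap c (by omega) (by omega) hc
  · rintro (rfl | rfl)
    · exact ⟨hs, le_rfl, hst⟩
    · exact ⟨ht, hst, le_rfl⟩

theorem exists_greatest_mem_lt {S : Set ℕ} {u n : ℕ} (hu : u ∈ S) (hun : u < n) :
    ∃ v ∈ S, u ≤ v ∧ v < n ∧ ∀ c, v < c → c < n → c ∉ S := by
  classical
  set v := Nat.findGreatest (· ∈ S) (n - 1)
  have hvn : v ≤ n - 1 := Nat.findGreatest_le _
  refine ⟨v, Nat.findGreatest_spec (by omega) hu, Nat.le_findGreatest (by omega) hu, by omega,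
    fun c hvc hcn hc => ?_⟩
  have := Nat.le_findGreatest (P := (· ∈ S)) (show c ≤ n - 1 by omega) hc
  omega

end Set

section Factorizations

variable {M : Type*} [CommMonoid M]

theorem not_isUnit_prod_of_MIrred {l : Multiset M} (hne : l ≠ 0) (h : ∀ a ∈ l, MIrred a) :
    ¬IsUnit l.prod := by
  obtain ⟨a, ha⟩ := Multiset.exists_mem_of_ne_zero hne
  obtain ⟨m, rfl⟩ := Multiset.exists_cons_of_mem ha
  rw [Multiset.prod_cons]
  exact fun hu => (h a (Multiset.mem_cons_self a m)).1 (isUnit_of_mul_isUnit_left hu)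

theorem not_isUnit_of_mem_MLSet {z : M} {n : ℕ} (hn : 0 < n) (h : n ∈ MLSet z) : ¬IsUnit z := by
  obtain ⟨l, rfl, hl, rfl⟩ := h
  exact not_isUnit_prod_of_MIrred (Multiset.card_pos.mp hn) hl

theorem eq_one_of_zero_mem_MLSet {z : M} (h : 0 ∈ MLSet z) : z = 1 := by
  obtain ⟨l, hl, -, rfl⟩ := h
  rw [Multiset.card_eq_zero.mp hl, Multiset.prod_zero]

theorem add_mem_MLSet_mul {x y : M} {m n : ℕ} (hx : m ∈ MLSet x) (hy : n ∈ MLSet y) :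
    m + n ∈ MLSet (x * y) := by
  obtain ⟨l, rfl, hl, rfl⟩ := hx
  obtain ⟨l', rfl, hl', rfl⟩ := hy
  refine ⟨l + l', Multiset.card_add l l', fun a ha => ?_, Multiset.prod_add l l'⟩
  exact (Multiset.mem_add.mp ha).elim (hl a) (hl' a)

theorem exists_mul_of_mem_MLSet {z : M} {m n : ℕ} (h : n ∈ MLSet z) (hmn : m ≤ n) :
    ∃ x y, z = x * y ∧ m ∈ MLSet x ∧ n - m ∈ MLSet y := by
  obtain ⟨l, rfl, hl, rfl⟩ := h
  have hpos : 0 < Multiset.card (Multiset.powersetCard m l) := by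
    rw [Multiset.card_powersetCard]
    exact Nat.choose_pos hmn
  obtain ⟨l₁, hl₁⟩ := Multiset.card_pos_iff_exists_mem.mp hpos
  obtain ⟨hle, rfl⟩ := Multiset.mem_powersetCard.mp hl₁
  obtain ⟨l₂, rfl⟩ := Multiset.le_iff_exists_add.mp hle
  refine ⟨l₁.prod, l₂.prod, Multiset.prod_add l₁ l₂, ⟨l₁, rfl, fun a ha => hl a ?_, rfl⟩,
    ⟨l₂, by simp, fun a ha => hl a ?_, rfl⟩⟩ <;> simp [ha]

def IsLengthGap (z : M) (s t : ℕ) : Prop :=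
  s ∈ MLSet z ∧ t ∈ MLSet z ∧ s < t ∧ ∀ c, s < c → c < t → c ∉ MLSet z

namespace IsLengthGap

variable {z : M} {s t : ℕ}

theorem not_isUnit (h : IsLengthGap z s t) : ¬IsUnit z :=
  not_isUnit_of_mem_MLSet (Nat.zero_lt_of_lt h.2.2.1) h.2.1

theorem pos (h : IsLengthGap z s t) : 0 < s := by
  by_contra hs
  obtain rfl : s = 0 := by omega
  exact h.not_isUnit (eq_one_of_zero_mem_MLSet h.1 ▸ isUnit_one)

theorem MLSet_inter_Icc (h : IsLengthGap z s t) : MLSet z ∩ Set.Icc s t = {s, t} :=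
  Set.inter_Icc_eq_pair h.1 h.2.1 h.2.2.1.le h.2.2.2

theorem exists_factor (h : IsLengthGap z s t) {n : ℕ} (hn : n ≤ t) :
    ∃ w : M, n ∈ MLSet w ∧ ∀ u ∈ MLSet w, u < n → u + t ≤ s + n := by
  obtain ⟨w, y, rfl, hw, hy⟩ := exists_mul_of_mem_MLSet h.2.1 hn
  refine ⟨w, hw, fun u hu hun => ?_⟩
  have hlen : u + (t - n) ∈ MLSet (w * y) := add_mem_MLSet_mul hu hy
  by_contra hlt
  exact h.2.2.2 _ (by omega) (by omega) hlen

theorem exists_isLeast_or_lt (h : IsLengthGap z s t) {k : ℕ} (hk : 0 < k) (hkt : s + k ≤ t) :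
    ∃ w : M, ¬IsUnit w ∧ (IsLeast (MLSet w) (s + k - 1) ∨
      ∃ s' t', IsLengthGap w s' t' ∧ s' + k ≤ t' ∧ s' < s) := by
  obtain ⟨w, hw, hshort⟩ := h.exists_factor (n := s + k - 1) (by omega)
  refine ⟨w, not_isUnit_of_mem_MLSet (by have := h.pos; omega) hw, ?_⟩
  by_cases hleast : IsLeast (MLSet w) (s + k - 1)
  · exact Or.inl hleast
  obtain ⟨u, hu, hun⟩ : ∃ u ∈ MLSet w, u < s + k - 1 := by
    by_contra! hge
    exact hleast ⟨hw, fun u hu => hge u hu⟩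
  obtain ⟨v, hv, huv, hvn, hgap⟩ := Set.exists_greatest_mem_lt hu hun
  have := hshort v hv hvn
  exact Or.inr ⟨v, s + k - 1, ⟨hv, hw, hvn, hgap⟩, by omega, by omega⟩

end IsLengthGap

theorem exists_isLengthGap_isLeast {k : ℕ} (hk : 0 < k) {z : M} {s t : ℕ}
    (h : IsLengthGap z s t) (hkt : s + k ≤ t) :
    ∃ (z : M) (s t : ℕ) (w : M), IsLengthGap z s t ∧ s + k ≤ t ∧ ¬IsUnit w ∧ IsLeast (MLSet w) (s + k - 1) := by
  induction s using Nat.strong_induction_on generalizing z t with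
  | _ s ih =>
    obtain ⟨w, hw, hleast | ⟨s', t', h', hkt', hs'⟩⟩ := h.exists_isLeast_or_lt hk hkt
    · exact ⟨z, s, t, w, h, hkt, hw, hleast⟩
    · exact ih s' hs' h' hkt'

end Factorizations

theorem stmt14_general {M : Type*} [CancelCommMonoid M]
    (hbdd : BddAbove {r : ℕ | ∃ x : M, ¬IsUnit x ∧ IsLeast (MLSet x) r})
    (lam : ℕ)
    (hlam : lam = 1 + sSup {r : ℕ | ∃ x : M, ¬IsUnit x ∧ IsLeast (MLSet x) r})
    (k : ℕ) (hk : ∃ z : M, ¬IsUnit z ∧ k ∈ MDelta z) :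
    ∃ (z : M) (r k' : ℕ), ¬IsUnit z ∧ r ≤ lam - k ∧ k ≤ k' ∧
      MLSet z ∩ Set.Icc r (r + k') = {r, r + k'} := by
  obtain ⟨z₀, -, a, b, ha, hb, hab, hgap, rfl⟩ := hk
  obtain ⟨z, s, t, w, h, hkt, hw, hleast⟩ :=
    exists_isLengthGap_isLeast (k := b - a) (by omega) (⟨ha, hb, hab, hgap⟩ : IsLengthGap z₀ a b)
      (by omega)
  have hsup := le_csSup hbdd ⟨w, hw, hleast⟩
  refine ⟨z, s, t - s, h.not_isUnit, by omega, by omega, ?_⟩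
  rw [Nat.add_sub_cancel' h.2.2.1.le]
  exact h.MLSet_inter_Icc

theorem stmt14 {M : Type*} [CancelCommMonoid M]
    (hatomic : ∀ x : M, ¬IsUnit x → ∃ r : ℕ, r ∈ MLSet x)
    (hbdd : BddAbove {r : ℕ | ∃ x : M, ¬IsUnit x ∧ IsLeast (MLSet x) r})
    (lam : ℕ)
    (hlam : lam = 1 + sSup {r : ℕ | ∃ x : M, ¬IsUnit x ∧ IsLeast (MLSet x) r})
    (k : ℕ) (hk : ∃ z : M, ¬IsUnit z ∧ k ∈ MDelta z) :
    ∃ (z : M) (r k' : ℕ), ¬IsUnit z ∧ r ≤ lam - k ∧ k ≤ k' ∧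
      MLSet z ∩ Set.Icc r (r + k') = {r, r + k'} :=
  stmt14_general hbdd lam hlam k hk
end

section
/- Let x = αm + is with 0 ≤ i ≤ m−1. The arithmetical Leamer monoid S_{m,k}^s has a finite column at x if and only if kα ≤ m−2 and 0 ≤ i ≤ kα−1, in which case the column at x has height kα − i; and S_{m,k}^s has an infinite column at x if and only if kα ≥ m−1. -/
/-!
Writing Γ = ⟨m, m+s, …, m+ks⟩, an element lies in Γ iff it is `a * m + b * s` with `b ≤ k * a`.
Since `gcd m s = 1`, for `t < m` this pins down the representation of `α * m + t * s` up to trading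
`s` copies of `m` for `m` copies of `s`, so `α * m + t * s ∈ Γ ↔ t ≤ k * α`. If `k * α ≥ m - 1`,
every residue `t % m` is at most `k * α`, so every `α * m + t * s` lies in Γ and the column is
infinite. Otherwise `k * α + 1 < m`, and the column at `α * m + i * s` consists exactly of the
`n ≥ 1` with `i + n ≤ k * α`.
-/

theorem mk_mem_leamer_iff {Γ : AddSubmonoid ℕ} {s x n : ℕ} (hn : 1 ≤ n) :
    (x, n) ∈ Leamer Γ s ↔ ∀ j ≤ n, x + j * s ∈ Γ := by
  simp only [Leamer, Set.mem_ofPred_eq, Prod.mk.injEq]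
  exact ⟨by rintro (⟨-, rfl⟩ | ⟨-, h⟩) <;> [omega; exact h], fun h => Or.inr ⟨hn, h⟩⟩

section ArithGamma

variable {m k s : ℕ}

theorem mem_arithGamma_iff {n : ℕ} :
    n ∈ ArithGamma m k s ↔ ∃ a b, b ≤ k * a ∧ n = a * m + b * s := by
  constructor
  · intro h
    induction h using AddSubmonoid.closure_induction with
    | mem v hv =>
      obtain ⟨j, hj, rfl⟩ := hv
      exact ⟨1, j, by simpa using hj, by ring⟩
    | zero => exact ⟨0, 0, le_rfl, by simp⟩
    | add u v _ _ hu hv =>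
      obtain ⟨a₁, b₁, h₁, rfl⟩ := hu
      obtain ⟨a₂, b₂, h₂, rfl⟩ := hv
      exact ⟨a₁ + a₂, b₁ + b₂, by rw [mul_add]; omega, by ring⟩
  · rintro ⟨a, b, hb, rfl⟩
    induction a generalizing b with
    | zero =>
      obtain rfl : b = 0 := by omega
      simp
    | succ a ih =>
      have hsplit : (a + 1) * m + b * s = (m + min b k * s) + (a * m + (b - min b k) * s) := by
        conv_lhs => rw [← Nat.add_sub_of_le (min_le_left b k)]
        ring
      rw [hsplit]
      exact add_mem (AddSubmonoid.subset_closure ⟨_, min_le_right b k, rfl⟩)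
        (ih _ (by rw [mul_add_one] at hb; omega))

theorem mul_add_mul_mem_arithGamma {a t : ℕ} (h : t ≤ k * a) :
    a * m + t * s ∈ ArithGamma m k s :=
  mem_arithGamma_iff.2 ⟨a, t, h, rfl⟩

theorem mul_add_mul_mem_arithGamma_of_pred_le {a : ℕ} (hm : 0 < m) (h : m - 1 ≤ k * a) (t : ℕ) :
    a * m + t * s ∈ ArithGamma m k s := by
  have hdecomp : a * m + t * s = (a + t / m * s) * m + t % m * s := by
    conv_lhs => rw [← Nat.div_add_mod t m]
    ring
  rw [hdecomp]
  apply mul_add_mul_mem_arithGamma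
  have := Nat.mod_lt t hm
  have : k * a ≤ k * (a + t / m * s) := Nat.mul_le_mul_left _ (Nat.le_add_right _ _)
  omega

theorem mul_add_mul_mem_arithGamma_iff_of_lt (hms : Nat.Coprime m s) {a t : ℕ} (htm : t < m) :
    a * m + t * s ∈ ArithGamma m k s ↔ t ≤ k * a := by
  refine ⟨fun hmem => ?_, mul_add_mul_mem_arithGamma⟩
  by_contra! hkt
  obtain ⟨a', b, hb, heq⟩ := mem_arithGamma_iff.1 hmem
  have hbt : b < t := by
    by_contra! htb
    have : a' * m ≤ a * m := by nlinarith
    have : a' ≤ a := Nat.le_of_mul_le_mul_right this (by omega)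
    nlinarith
  obtain ⟨d, rfl⟩ : ∃ d, t = b + d + 1 := ⟨t - b - 1, by omega⟩
  have hd : a * m + (d + 1) * s = a' * m := by linarith
  have hdvd : m ∣ (d + 1) * s :=
    (Nat.dvd_add_right (dvd_mul_left m a)).1 (hd ▸ dvd_mul_left m a')
  have := Nat.le_of_dvd d.succ_pos (hms.dvd_of_dvd_mul_right hdvd)
  omega

theorem column_arithGamma_eq_Ici (hm : 0 < m) {α : ℕ} (hα : m - 1 ≤ k * α) (i : ℕ) :
    {n | 1 ≤ n ∧ (α * m + i * s, n) ∈ Leamer (ArithGamma m k s) s} = Set.Ici 1 := by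
  ext n
  refine ⟨And.left, fun hn => ⟨hn, (mk_mem_leamer_iff hn).2 fun j _ => ?_⟩⟩
  rw [add_assoc, ← add_mul]
  exact mul_add_mul_mem_arithGamma_of_pred_le hm hα _

theorem column_arithGamma_eq_Icc (hms : Nat.Coprime m s) {α i : ℕ} (hα : k * α + 1 < m)
    (hi : i < m) :
    {n | 1 ≤ n ∧ (α * m + i * s, n) ∈ Leamer (ArithGamma m k s) s} = Set.Icc 1 (k * α - i) := by
  ext n
  simp only [Set.mem_ofPred_eq, Set.mem_Icc]
  refine and_congr_right fun hn => ?_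
  simp only [mk_mem_leamer_iff hn, add_assoc, ← add_mul]
  constructor
  · intro hmem
    by_contra! hlt
    -- the first index `j ≤ n` with `i + j > k * α`
    have hfail := hmem (max i (k * α + 1) - i) (by omega)
    rw [mul_add_mul_mem_arithGamma_iff_of_lt hms (by omega)] at hfail
    omega
  · intro hle j hj
    exact mul_add_mul_mem_arithGamma (by omega)

end ArithGamma

theorem stmt16 (m k s : ℕ) (hk1 : 1 ≤ k) (hkm : k ≤ m - 1) (hgcd : Nat.gcd m s = 1)
    (α i x : ℕ) (hi : i ≤ m - 1) (hx : x = α * m + i * s) :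
    ((∃ h : ℕ, IsGreatest {n : ℕ | 1 ≤ n ∧ (x, n) ∈ Leamer (ArithGamma m k s) s} h) ↔
      (k * α ≤ m - 2 ∧ i + 1 ≤ k * α)) ∧
    (k * α ≤ m - 2 ∧ i + 1 ≤ k * α →
      IsGreatest {n : ℕ | 1 ≤ n ∧ (x, n) ∈ Leamer (ArithGamma m k s) s} (k * α - i)) ∧
    ((∀ n : ℕ, 1 ≤ n → (x, n) ∈ Leamer (ArithGamma m k s) s) ↔ m - 1 ≤ k * α) := by
  subst hx
  rcases le_or_gt (m - 1) (k * α) with hα | hα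
  · have hcol := column_arithGamma_eq_Ici (s := s) (by omega) hα i
    rw [hcol]
    refine ⟨iff_of_false (fun ⟨_, h⟩ => not_bddAbove_Ici 1 h.bddAbove) (by omega),
      fun _ => by omega, iff_of_true (fun n hn => (hcol.ge (Set.mem_Ici.2 hn)).2) hα⟩
  · have hcol := column_arithGamma_eq_Icc hgcd (by omega : k * α + 1 < m) (by omega : i < m)
    rw [hcol]
    refine ⟨⟨fun ⟨_, h⟩ => ?_, fun _ => ⟨_, isGreatest_Icc (by omega)⟩⟩,
      fun _ => isGreatest_Icc (by omega), iff_of_false (fun hall => ?_) (by omega)⟩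
    · have := Set.nonempty_Icc.1 h.nonempty
      omega
    · have := (hcol.le ⟨by omega, hall (k * α - i + 1) (by omega)⟩).2
      omega
end
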